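/- Let x = (x₁, x₂) and y = (y₁, y₂) be points of the upper half plane ℍ² and define z = ( (x₁y₂ + x₂y₁)/(x₂ + y₂), √(x₂y₂)·√((x₂+y₂)² + (x₁−y₁)²)/(x₂ + y₂) ). Then z ∈ ℍ² and z is the hyperbolic midpoint of x and y: ρ(x,z) = ρ(y,z) = ρ(x,y)/2. -/

import Mathlib

/-- The inverse hyperbolic cosine: `arcosh t = log (t + √(t² − 1))`. -/
noncomputable def arcosh (t : ℝ) : ℝ := Real.log (t + Real.sqrt (t ^ 2 - 1))

/-- Hyperbolic distance in the upper half plane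
`ℍ² = { (x₁,x₂) ∈ ℝ² : x₂ > 0 }`: `cosh ρ(x,y) = 1 + |x−y|²/(2 x₂ y₂)`. -/
noncomputable def hypDistHalfPlane (x y : EuclideanSpace ℝ (Fin 2)) : ℝ :=
  arcosh (1 + ‖x - y‖ ^ 2 / (2 * x 1 * y 1))

/-!
Writing `C(x, y) = 1 + |x - y|² / (2 x₂ y₂)` for `cosh ρ(x, y)`, the identity
`|x - y|² + 4 x₂ y₂ = (x₁ - y₁)² + (x₂ + y₂)²` gives
`(C(x, y) + 1) / 2 = ((x₁ - y₁)² + (x₂ + y₂)²) / (4 x₂ y₂)`. A direct computation shows that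
`C(x, z)` is the square root of this, and by the symmetry of `z` in `x` and `y` so is `C(y, z)`.
The half-argument formula `cosh (ρ / 2) = √((cosh ρ + 1) / 2)` then gives
`ρ(x, z) = ρ(y, z) = ρ(x, y) / 2`.
-/

namespace Real

theorem arcosh_sqrt_add_one_div_two {t : ℝ} (ht : 1 ≤ t) :
    Real.arcosh √((t + 1) / 2) = Real.arcosh t / 2 := by
  obtain ⟨u, hu, rfl⟩ : ∃ u, 0 ≤ u ∧ cosh u = t :=
    ⟨Real.arcosh t, arcosh_nonneg ht, cosh_arcosh ht⟩
  have hhalf : (cosh u + 1) / 2 = cosh (u / 2) ^ 2 := by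
    have h := cosh_two_mul (u / 2)
    rw [mul_div_cancel₀ u two_ne_zero] at h
    linarith [cosh_sq (u / 2)]
  rw [hhalf, sqrt_sq (cosh_pos _).le, arcosh_cosh (by positivity), arcosh_cosh hu]

end Real

theorem EuclideanSpace.norm_sub_sq_fin_two (a b : EuclideanSpace ℝ (Fin 2)) :
    ‖a - b‖ ^ 2 = (a 0 - b 0) ^ 2 + (a 1 - b 1) ^ 2 := by
  simp [EuclideanSpace.norm_sq_eq, Fin.sum_univ_two]

noncomputable def halfPlaneCoshDist (x y : EuclideanSpace ℝ (Fin 2)) : ℝ :=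
  1 + ‖x - y‖ ^ 2 / (2 * x 1 * y 1)

theorem hypDistHalfPlane_eq_arcosh (x y : EuclideanSpace ℝ (Fin 2)) :
    hypDistHalfPlane x y = Real.arcosh (halfPlaneCoshDist x y) := rfl

theorem halfPlaneCoshDist_comm (x y : EuclideanSpace ℝ (Fin 2)) :
    halfPlaneCoshDist x y = halfPlaneCoshDist y x := by
  rw [halfPlaneCoshDist, halfPlaneCoshDist, norm_sub_rev, mul_right_comm]

theorem one_le_halfPlaneCoshDist {x y : EuclideanSpace ℝ (Fin 2)}
    (hx : 0 < x 1) (hy : 0 < y 1) :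
    1 ≤ halfPlaneCoshDist x y :=
  le_add_of_nonneg_right (by positivity)

theorem sqrt_halfPlaneCoshDist_add_one_div_two {x y : EuclideanSpace ℝ (Fin 2)}
    (hx : 0 < x 1) (hy : 0 < y 1) :
    √((halfPlaneCoshDist x y + 1) / 2) =
      √((x 1 + y 1) ^ 2 + (x 0 - y 0) ^ 2) / (2 * √(x 1 * y 1)) := by
  have h : (halfPlaneCoshDist x y + 1) / 2 =
      ((x 1 + y 1) ^ 2 + (x 0 - y 0) ^ 2) / 2 ^ 2 / (x 1 * y 1) := by
    rw [halfPlaneCoshDist, EuclideanSpace.norm_sub_sq_fin_two]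
    field_simp
    ring
  rw [h, Real.sqrt_div' _ (by positivity), Real.sqrt_div' _ (by positivity),
    Real.sqrt_sq two_pos.le, div_div]

theorem halfPlaneCoshDist_midpoint {x y z : EuclideanSpace ℝ (Fin 2)}
    (hx : 0 < x 1) (hy : 0 < y 1)
    (hz0 : z 0 = (x 0 * y 1 + x 1 * y 0) / (x 1 + y 1))
    (hz1 : z 1 = √(x 1 * y 1) * √((x 1 + y 1) ^ 2 + (x 0 - y 0) ^ 2) / (x 1 + y 1)) :
    halfPlaneCoshDist x z = √((halfPlaneCoshDist x y + 1) / 2) := by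
  rw [sqrt_halfPlaneCoshDist_add_one_div_two hx hy]
  set s := √(x 1 * y 1)
  set D := √((x 1 + y 1) ^ 2 + (x 0 - y 0) ^ 2)
  have hs : s ^ 2 = x 1 * y 1 := Real.sq_sqrt (by positivity)
  have hD : D ^ 2 = (x 1 + y 1) ^ 2 + (x 0 - y 0) ^ 2 := Real.sq_sqrt (by positivity)
  have hs0 : 0 < s := by positivity
  have hD0 : 0 < D := by positivity
  have hdist : ‖x - z‖ ^ 2 = x 1 * D ^ 2 / (x 1 + y 1) - 2 * x 1 * z 1 := by
    rw [EuclideanSpace.norm_sub_sq_fin_two, hz0, hz1]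
    field_simp
    linear_combination D ^ 2 * hs - x 1 ^ 2 * hD
  rw [halfPlaneCoshDist, hdist, hz1]
  field_simp
  ring

/-- The hyperbolic midpoint of two points of the upper half plane. -/
theorem hyperbolic_midpoint_halfPlane (x y z : EuclideanSpace ℝ (Fin 2))
    (hx : 0 < x 1) (hy : 0 < y 1)
    (hz0 : z 0 = (x 0 * y 1 + x 1 * y 0) / (x 1 + y 1))
    (hz1 : z 1 = Real.sqrt (x 1 * y 1) *
      Real.sqrt ((x 1 + y 1) ^ 2 + (x 0 - y 0) ^ 2) / (x 1 + y 1)) :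
    0 < z 1 ∧ hypDistHalfPlane x z = hypDistHalfPlane y z ∧
      hypDistHalfPlane x z = hypDistHalfPlane x y / 2 := by
  have hxz := halfPlaneCoshDist_midpoint hx hy hz0 hz1
  have hyz : halfPlaneCoshDist y z = √((halfPlaneCoshDist x y + 1) / 2) := by
    rw [halfPlaneCoshDist_comm x y]
    refine halfPlaneCoshDist_midpoint hy hx (by rw [hz0]; ring) ?_
    rw [hz1, mul_comm (x 1), add_comm (x 1), sub_sq_comm]
  refine ⟨by rw [hz1]; positivity, ?_, ?_⟩
  · rw [hypDistHalfPlane_eq_arcosh, hypDistHalfPlane_eq_arcosh, hxz, hyz]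
  · rw [hypDistHalfPlane_eq_arcosh, hypDistHalfPlane_eq_arcosh, hxz,
      Real.arcosh_sqrt_add_one_div_two (one_le_halfPlaneCoshDist hx hy)]
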